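/- For every τ > 0 there exists a constant C_τ > 0 depending only on τ such that for every p ≥ 1 and every random vector X ∈ ℝ^p with E[X] = 0, E‖X‖^{4+4τ} < ∞ and B_X > 0, one has E(|d_X(X₁,X₂)|^{2+2τ}) ≤ C_τ · B_X^{−(1+τ)} · L_{x,τ}, where X₁, X₂ are independent copies of X. -/

import Mathlib

open MeasureTheory ProbabilityTheory Filter

noncomputable section

variable {E F : Type*}

/-- Double-centered distance associated with the law `μ`. -/
def dcd [NormedAddCommGroup E] [MeasurableSpace E] (μ : Measure E) (x₁ x₂ : E) : ℝ :=
  ‖x₁ - x₂‖ - (∫ y, ‖x₁ - y‖ ∂μ) - (∫ y, ‖x₂ - y‖ ∂μ) + ∫ y, (∫ y', ‖y - y'‖ ∂μ) ∂μ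

/-- Squared distance covariance of a joint law. -/
def dCov2 [NormedAddCommGroup E] [MeasurableSpace E] [NormedAddCommGroup F] [MeasurableSpace F]
    (μ : Measure (E × F)) : ℝ :=
  ∫ z₁, (∫ z₂, dcd (μ.map Prod.fst) z₁.1 z₂.1 * dcd (μ.map Prod.snd) z₁.2 z₂.2 ∂μ) ∂μ

/-- Squared distance variance of a law. -/
def dVar2 [NormedAddCommGroup E] [MeasurableSpace E] (μ : Measure E) : ℝ :=
  ∫ x₁, (∫ x₂, dcd μ x₁ x₂ ^ 2 ∂μ) ∂μ

/-- Squared distance correlation of a joint law. -/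
def dCor2 [NormedAddCommGroup E] [MeasurableSpace E] [NormedAddCommGroup F] [MeasurableSpace F]
    (μ : Measure (E × F)) : ℝ :=
  if 0 < dVar2 (μ.map Prod.fst) * dVar2 (μ.map Prod.snd) then
    dCov2 μ / Real.sqrt (dVar2 (μ.map Prod.fst) * dVar2 (μ.map Prod.snd))
  else 0

/-- `E(|d_X(X₁,X₂)|^r)`. -/
def dMom [NormedAddCommGroup E] [MeasurableSpace E] (μ : Measure E) (r : ℝ) : ℝ :=
  ∫ x₁, (∫ x₂, |dcd μ x₁ x₂| ^ r ∂μ) ∂μ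

/-- `E[g_X(X₁,X₂,X₃,X₄)]`. -/
def gMean [NormedAddCommGroup E] [MeasurableSpace E] (μ : Measure E) : ℝ :=
  ∫ x₁, (∫ x₂, (∫ x₃, (∫ x₄,
    dcd μ x₁ x₂ * dcd μ x₁ x₃ * dcd μ x₂ x₄ * dcd μ x₃ x₄ ∂μ) ∂μ) ∂μ) ∂μ

/-- The U-centered sample distances `A*_{kl}`. -/
def Astar [NormedAddCommGroup E] (n : ℕ) (xs : Fin n → E) (k l : Fin n) : ℝ :=
  ‖xs k - xs l‖ - ((n : ℝ) - 2)⁻¹ * ∑ i, ‖xs i - xs l‖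
    - ((n : ℝ) - 2)⁻¹ * ∑ j, ‖xs k - xs j‖
    + (((n : ℝ) - 1) * ((n : ℝ) - 2))⁻¹ * ∑ i, ∑ j, ‖xs i - xs j‖

/-- Bias-corrected sample distance covariance `V*ₙ`. -/
def Vstar [NormedAddCommGroup E] [NormedAddCommGroup F] (n : ℕ)
    (xs : Fin n → E) (ys : Fin n → F) : ℝ :=
  ((n : ℝ) * ((n : ℝ) - 3))⁻¹ *
    ∑ k, ∑ l, if k = l then 0 else Astar n xs k l * Astar n ys k l

/-- Bias-corrected sample distance correlation `R*ₙ`. -/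
def Rstar [NormedAddCommGroup E] [NormedAddCommGroup F] (n : ℕ)
    (xs : Fin n → E) (ys : Fin n → F) : ℝ :=
  if 0 < Vstar n xs xs * Vstar n ys ys then
    Vstar n xs ys / Real.sqrt (Vstar n xs xs * Vstar n ys ys)
  else 0

/-- Rescaled sample distance correlation statistic `Tₙ`. -/
def Tstat [NormedAddCommGroup E] [NormedAddCommGroup F] (n : ℕ)
    (xs : Fin n → E) (ys : Fin n → F) : ℝ :=
  Real.sqrt ((n : ℝ) * ((n : ℝ) - 1) / 2) * Rstar n xs ys

/-- Studentized sample distance correlation statistic `T_R`. -/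
def TRstat [NormedAddCommGroup E] [NormedAddCommGroup F] (n : ℕ)
    (xs : Fin n → E) (ys : Fin n → F) : ℝ :=
  Real.sqrt ((n : ℝ) * ((n : ℝ) - 3) / 2 - 1) * Rstar n xs ys /
    Real.sqrt (1 - Rstar n xs ys ^ 2)

/-- Law of an i.i.d. sample of size `n` from the joint law `μ`. -/
def sampleLaw [MeasurableSpace E] [MeasurableSpace F] (μ : Measure (E × F)) (n : ℕ) :
    Measure (Fin n → E × F) :=
  Measure.pi fun _ : Fin n => μ

/-- `P(Tₙ ∈ s)` under i.i.d. sampling of size `n` from `μ`. -/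
def Tprob [NormedAddCommGroup E] [MeasurableSpace E] [NormedAddCommGroup F] [MeasurableSpace F]
    (μ : Measure (E × F)) (n : ℕ) (s : Set ℝ) : ℝ :=
  (sampleLaw μ n {ω | Tstat n (fun i => (ω i).1) (fun i => (ω i).2) ∈ s}).toReal

/-- `P(T_R ∈ s)` under i.i.d. sampling of size `n` from `μ`. -/
def TRprob [NormedAddCommGroup E] [MeasurableSpace E] [NormedAddCommGroup F] [MeasurableSpace F]
    (μ : Measure (E × F)) (n : ℕ) (s : Set ℝ) : ℝ :=
  (sampleLaw μ n {ω | TRstat n (fun i => (ω i).1) (fun i => (ω i).2) ∈ s}).toReal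

/-- CDF of the standard normal distribution. -/
def stdGaussCDF (t : ℝ) : ℝ := (gaussianReal 0 1 (Set.Iic t)).toReal

/-- `B_X = E‖X₁ − X₂‖² = 2E‖X‖²`. -/
def Bmom [NormedAddCommGroup E] [MeasurableSpace E] (μ : Measure E) : ℝ :=
  2 * ∫ x, ‖x‖ ^ 2 ∂μ

/-- `L_{x,τ}`. -/
def Lmom [NormedAddCommGroup E] [InnerProductSpace ℝ E] [MeasurableSpace E]
    (μ : Measure E) (τ : ℝ) : ℝ :=
  (∫ x, |‖x‖ ^ 2 - ∫ y, ‖y‖ ^ 2 ∂μ| ^ (2 + 2 * τ) ∂μ)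
    + ∫ x₁, (∫ x₂, |(inner ℝ x₁ x₂ : ℝ)| ^ (2 + 2 * τ) ∂μ) ∂μ

/-- `E[(X₁ᵀX₂)²]`. -/
def sqInnerMom [NormedAddCommGroup E] [InnerProductSpace ℝ E] [MeasurableSpace E]
    (μ : Measure E) : ℝ :=
  ∫ x₁, (∫ x₂, (inner ℝ x₁ x₂ : ℝ) ^ 2 ∂μ) ∂μ

/-- `E[(X₁ᵀ Σ_x X₂)²]`, using `X₁ᵀ Σ_x X₂ = E_Z[⟪X₁, Z⟫ ⟪Z, X₂⟫]`. -/
def sigQuad [NormedAddCommGroup E] [InnerProductSpace ℝ E] [MeasurableSpace E]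
    (μ : Measure E) : ℝ :=
  ∫ x₁, (∫ x₂, (∫ z, (inner ℝ x₁ z : ℝ) * (inner ℝ z x₂ : ℝ) ∂μ) ^ 2 ∂μ) ∂μ

/-- `E_x`. -/
def Emom [NormedAddCommGroup E] [InnerProductSpace ℝ E] [MeasurableSpace E]
    (μ : Measure E) (τ : ℝ) : ℝ :=
  (sigQuad μ + Bmom μ ^ (-(2 * τ)) * Lmom μ τ ^ ((2 + τ) / (1 + τ))) / sqInnerMom μ ^ 2

/-- `𝒢₁(X) = |E[(X₁ᵀX₂)² X₁ᵀΣ_x²X₂]|`. -/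
def Gone [NormedAddCommGroup E] [InnerProductSpace ℝ E] [MeasurableSpace E]
    (μ : Measure E) : ℝ :=
  |∫ x₁, (∫ x₂, ((inner ℝ x₁ x₂ : ℝ) ^ 2 *
    ∫ z, (∫ w, (inner ℝ x₁ z : ℝ) * (inner ℝ z w : ℝ) * (inner ℝ w x₂ : ℝ) ∂μ) ∂μ) ∂μ) ∂μ|

/-- `𝒢₂(X) = E[‖X₁‖²(X₁ᵀΣ_xX₂)²]`. -/
def Gtwo [NormedAddCommGroup E] [InnerProductSpace ℝ E] [MeasurableSpace E]
    (μ : Measure E) : ℝ :=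
  ∫ x₁, (∫ x₂, ‖x₁‖ ^ 2 * (∫ z, (inner ℝ x₁ z : ℝ) * (inner ℝ z x₂ : ℝ) ∂μ) ^ 2 ∂μ) ∂μ

/-- `𝒢₃(X) = E[XᵀXXᵀ] Σ_x² E[XXᵀX]`. -/
def Gthree [NormedAddCommGroup E] [InnerProductSpace ℝ E] [MeasurableSpace E]
    (μ : Measure E) : ℝ :=
  ∫ x₁, (∫ z, (∫ w, (∫ x₂,
    ‖x₁‖ ^ 2 * (inner ℝ x₁ z : ℝ) * (inner ℝ z w : ℝ) * (inner ℝ w x₂ : ℝ) * ‖x₂‖ ^ 2 ∂μ) ∂μ) ∂μ) ∂μ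

/-- `N_τ(X)`. -/
def Nmom [NormedAddCommGroup E] [InnerProductSpace ℝ E] [MeasurableSpace E]
    (μ : Measure E) (τ : ℝ) : ℝ :=
  (sigQuad μ + Bmom μ ^ (-(2 * τ)) * Lmom μ τ ^ ((2 + τ) / (1 + τ))
      + (Bmom μ)⁻¹ * (Gone μ + Gtwo μ + Gthree μ)) / sqInnerMom μ ^ 2

/-- `W(x₁, x₂) = B_X⁻¹(‖x₁ − x₂‖² − B_X)`. -/
def Wfun [NormedAddCommGroup E] [MeasurableSpace E] (μ : Measure E) (x₁ x₂ : E) : ℝ :=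
  (Bmom μ)⁻¹ * (‖x₁ - x₂‖ ^ 2 - Bmom μ)

/-- The kernel `h`. -/
def hker [NormedAddCommGroup E] [NormedAddCommGroup F] (x : Fin 4 → E) (y : Fin 4 → F) : ℝ :=
  (1 / 4) * (∑ i, ∑ j, if i = j then 0 else ‖x i - x j‖ * ‖y i - y j‖)
    - (1 / 4) * ∑ i, ((∑ j, if j = i then 0 else ‖x i - x j‖) *
        (∑ j, if j = i then 0 else ‖y i - y j‖))
    + (1 / 24) * (∑ i, ∑ j, if i = j then 0 else ‖x i - x j‖) *
        (∑ i, ∑ j, if i = j then 0 else ‖y i - y j‖)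

/-- The coordinates of a law on `ℝ^p` form an `m`-dependent sequence: for every `j`, the first
`j` coordinates are independent of the coordinates with (one-based) index `≥ j + m + 1`. -/
def mdepLaw (p m : ℕ) (μ : Measure (EuclideanSpace ℝ (Fin p))) : Prop :=
  ∀ j : ℕ,
    μ.map (fun x => ((fun i : {i : Fin p // (i : ℕ) < j} => x i.1),
        (fun i : {i : Fin p // j + m ≤ (i : ℕ)} => x i.1)))
      = (μ.map fun x => fun i : {i : Fin p // (i : ℕ) < j} => x i.1).prod
          (μ.map fun x => fun i : {i : Fin p // j + m ≤ (i : ℕ)} => x i.1)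

/-- Joint law of `(X, Y)` where `Yⱼ = gⱼ(Xⱼ)`. -/
def jointLaw (p : ℕ) (μ : Measure (EuclideanSpace ℝ (Fin p))) (g : Fin p → ℝ → ℝ) :
    Measure (EuclideanSpace ℝ (Fin p) × EuclideanSpace ℝ (Fin p)) :=
  μ.map fun x => (x, (EuclideanSpace.equiv (Fin p) ℝ).symm fun j => g j (x j))

/-- Law of `Σ^{1/2} Z` for `Z` with i.i.d. standard normal coordinates. -/
def gaussLaw (p : ℕ) (S : Matrix (Fin p) (Fin p) ℝ) (hS : S.PosSemidef) :
    Measure (EuclideanSpace ℝ (Fin p)) :=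
  (Measure.pi fun _ : Fin p => gaussianReal 0 1).map
    (fun z => (EuclideanSpace.equiv (Fin p) ℝ).symm ((hS.1.eigenvectorUnitary.1 *
      Matrix.diagonal ((RCLike.ofReal : ℝ → ℝ) ∘ (√·) ∘ hS.1.eigenvalues) *
      (star hS.1.eigenvectorUnitary : Matrix (Fin p) (Fin p) ℝ)).mulVec z))

private lemma rpow_two_add_le {r a b : ℝ} (hr : 0 ≤ r) (ha : 0 ≤ a) (hb : 0 ≤ b) :
    (a + b) ^ r ≤ 2 ^ r * (a ^ r + b ^ r) := by
  have hm : a + b ≤ 2 * max a b := by rcases le_total a b with h | h <;>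
    simp [max_eq_right, max_eq_left, h] <;> linarith
  calc (a + b) ^ r ≤ (2 * max a b) ^ r :=
        Real.rpow_le_rpow (by linarith) hm hr
    _ = 2 ^ r * (max a b) ^ r := Real.mul_rpow (by norm_num) (le_max_of_le_left ha)
    _ ≤ 2 ^ r * (a ^ r + b ^ r) := by
        gcongr
        rcases max_cases a b with ⟨h1, _⟩ | ⟨h1, _⟩ <;> rw [h1]
        · nlinarith [Real.rpow_nonneg hb r]
        · nlinarith [Real.rpow_nonneg ha r]

private lemma jensen_rpow {α : Type*} [MeasurableSpace α] (μ : Measure α)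
    [IsProbabilityMeasure μ] {r : ℝ} (hr : 1 < r) {g : α → ℝ}
    (hgm : AEStronglyMeasurable g μ) (hg0 : ∀ x, 0 ≤ g x)
    (hgr : Integrable (fun x => g x ^ r) μ) :
    (∫ x, g x ∂μ) ^ r ≤ ∫ x, g x ^ r ∂μ := by
  have hr0 : (0:ℝ) < r := by linarith
  have hgL : MemLp g (ENNReal.ofReal r) μ := by
    have h1 : MemLp (fun x => ‖g x‖ ^ (ENNReal.ofReal r).toReal) ((ENNReal.ofReal r) / (ENNReal.ofReal r)) μ := by
      rw [ENNReal.div_self (by simp [hr0]) (by simp)]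
      rw [memLp_one_iff_integrable]
      refine hgr.congr (Filter.Eventually.of_forall fun x => ?_)
      simp [Real.norm_of_nonneg (hg0 x), ENNReal.toReal_ofReal hr0.le]
    exact (memLp_norm_rpow_iff hgm (by simp [hr0]) (by simp)).mp h1
  have hpq : r.HolderConjugate (r / (r - 1)) := (Real.holderConjugate_iff_eq_conjExponent hr).mpr rfl
  have hone : MemLp (fun _ : α => (1:ℝ)) (ENNReal.ofReal (r / (r-1))) μ := memLp_const 1
  have h := integral_mul_le_Lp_mul_Lq_of_nonneg hpq
    (Filter.Eventually.of_forall hg0) (Filter.Eventually.of_forall fun _ => zero_le_one) hgL hone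
  simp only [mul_one, Real.one_rpow, integral_const, measure_univ, ENNReal.toReal_one,
    smul_eq_mul, one_mul] at h
  have h2 : ∫ x, g x ∂μ ≤ (∫ x, g x ^ r ∂μ) ^ (1/r) := by simpa using h
  have hnn : 0 ≤ ∫ x, g x ^ r ∂μ := integral_nonneg fun x => Real.rpow_nonneg (hg0 x) r
  calc (∫ x, g x ∂μ) ^ r ≤ ((∫ x, g x ^ r ∂μ) ^ (1/r)) ^ r :=
        Real.rpow_le_rpow (integral_nonneg hg0) h2 hr0.le
    _ = ∫ x, g x ^ r ∂μ := by
        rw [← Real.rpow_mul hnn, one_div, inv_mul_cancel₀ hr0.ne', Real.rpow_one]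

private lemma rpow_seven_add_le {r t1 t2 t3 t4 t5 t6 t7 : ℝ} (hr : 0 ≤ r)
    (h1 : 0 ≤ t1) (h2 : 0 ≤ t2) (h3 : 0 ≤ t3) (h4 : 0 ≤ t4) (h5 : 0 ≤ t5)
    (h6 : 0 ≤ t6) (h7 : 0 ≤ t7) :
    (t1 + t2 + t3 + t4 + t5 + t6 + t7) ^ r ≤
      8 ^ r * (t1 ^ r + t2 ^ r + t3 ^ r + t4 ^ r + t5 ^ r + t6 ^ r + t7 ^ r) := by
  set c : ℝ := 2 ^ r with hc
  have hc0 : 0 ≤ c := Real.rpow_nonneg (by norm_num) r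
  have hc1 : 1 ≤ c := by
    rw [hc]
    calc (1:ℝ) = 1 ^ r := (Real.one_rpow r).symm
    _ ≤ 2 ^ r := Real.rpow_le_rpow (by norm_num) (by norm_num) hr
  have h8 : (8:ℝ) ^ r = c * (c * c) := by
    rw [hc, ← Real.mul_rpow (by norm_num) (by norm_num),
      ← Real.mul_rpow (by norm_num) (by norm_num)]
    norm_num
  have e : t1 + t2 + t3 + t4 + t5 + t6 + t7 = ((t1+t2)+(t3+t4)) + ((t5+t6)+t7) := by ring
  rw [e, h8]
  have k12 := rpow_two_add_le hr h1 h2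
  have k34 := rpow_two_add_le hr h3 h4
  have k56 := rpow_two_add_le hr h5 h6
  have kA := rpow_two_add_le hr (by linarith : (0:ℝ) ≤ t1+t2) (by linarith : (0:ℝ) ≤ t3+t4)
  have kB := rpow_two_add_le hr (by linarith : (0:ℝ) ≤ t5+t6) h7
  have kT := rpow_two_add_le hr (by linarith : (0:ℝ) ≤ (t1+t2)+(t3+t4))
    (by linarith : (0:ℝ) ≤ (t5+t6)+t7)
  have p1 : 0 ≤ t1 ^ r := Real.rpow_nonneg h1 r
  have p2 : 0 ≤ t2 ^ r := Real.rpow_nonneg h2 r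
  have p3 : 0 ≤ t3 ^ r := Real.rpow_nonneg h3 r
  have p4 : 0 ≤ t4 ^ r := Real.rpow_nonneg h4 r
  have p5 : 0 ≤ t5 ^ r := Real.rpow_nonneg h5 r
  have p6 : 0 ≤ t6 ^ r := Real.rpow_nonneg h6 r
  have p7 : 0 ≤ t7 ^ r := Real.rpow_nonneg h7 r
  have q12 : 0 ≤ (t1+t2) ^ r := Real.rpow_nonneg (by linarith) r
  have q34 : 0 ≤ (t3+t4) ^ r := Real.rpow_nonneg (by linarith) r
  have q56 : 0 ≤ (t5+t6) ^ r := Real.rpow_nonneg (by linarith) r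
  nlinarith [mul_nonneg (mul_nonneg hc0 hc0) p7, mul_le_mul_of_nonneg_left kA hc0,
    mul_le_mul_of_nonneg_left kB hc0,
    mul_le_mul_of_nonneg_left k12 (mul_nonneg hc0 hc0),
    mul_le_mul_of_nonneg_left k34 (mul_nonneg hc0 hc0),
    mul_le_mul_of_nonneg_left k56 (mul_nonneg hc0 hc0),
    mul_nonneg (mul_nonneg (mul_nonneg hc0 hc0) p7) (sub_nonneg.mpr hc1)]

private lemma combine_bounds {s i R1 R2 R3 R4 a1 a2 m n1 n2 N d : ℝ} (hs : 0 < s)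
    (hd : |d| ≤ |i| / s + R1 + R2 + R3 + R4)
    (h1 : R1 ≤ (a1 + a2 + 2 * |i|) / (2 * s)) (h2 : R2 ≤ (a1 + m + 2 * n1) / (2 * s))
    (h3 : R3 ≤ (a2 + m + 2 * n2) / (2 * s)) (h4 : R4 ≤ (m + m + 2 * N) / (2 * s))
    (ha1 : 0 ≤ a1) (ha2 : 0 ≤ a2) (hm : 0 ≤ m) (hn1 : 0 ≤ n1) (hn2 : 0 ≤ n2) (hN : 0 ≤ N) :
    |d| ≤ 2 / s * (|i| + a1 + a2 + m + n1 + n2 + N) := by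
  have key : |i| / s + R1 + R2 + R3 + R4 ≤
      (2 * |i| + (a1 + a2 + 2 * |i|) + (a1 + m + 2 * n1) + (a2 + m + 2 * n2)
        + (m + m + 2 * N)) / (2 * s) := by
    have e2 : 2 * |i| / (2 * s) = |i| / s := mul_div_mul_left _ _ two_ne_zero
    have expand : (2 * |i| + (a1 + a2 + 2 * |i|) + (a1 + m + 2 * n1) + (a2 + m + 2 * n2)
        + (m + m + 2 * N)) / (2 * s) = 2 * |i| / (2 * s) + (a1 + a2 + 2 * |i|) / (2 * s)
        + (a1 + m + 2 * n1) / (2 * s) + (a2 + m + 2 * n2) / (2 * s)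
        + (m + m + 2 * N) / (2 * s) := by ring
    rw [expand, e2]
    linarith
  refine hd.trans (key.trans ?_)
  rw [div_le_iff₀ (by positivity)]
  have e3 : 2 / s * (|i| + a1 + a2 + m + n1 + n2 + N) * (2 * s) =
      4 * (|i| + a1 + a2 + m + n1 + n2 + N) := by field_simp; ring
  rw [e3]
  have habs := abs_nonneg i
  linarith

private lemma rpow_combine {r s d i a1 a2 m n1 n2 N : ℝ} (hr : 0 ≤ r) (hs : 0 < s)
    (hd : |d| ≤ 2 / s * (|i| + a1 + a2 + m + n1 + n2 + N))
    (ha1 : 0 ≤ a1) (ha2 : 0 ≤ a2) (hm : 0 ≤ m) (hn1 : 0 ≤ n1) (hn2 : 0 ≤ n2) (hN : 0 ≤ N) :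
    |d| ^ r ≤ (2 / s) ^ r * 8 ^ r *
      (|i| ^ r + a1 ^ r + a2 ^ r + m ^ r + n1 ^ r + n2 ^ r + N ^ r) := by
  have h0 : (0:ℝ) ≤ 2 / s := by positivity
  have hT : (0:ℝ) ≤ |i| + a1 + a2 + m + n1 + n2 + N := by
    have := abs_nonneg i; linarith
  calc |d| ^ r ≤ (2 / s * (|i| + a1 + a2 + m + n1 + n2 + N)) ^ r :=
        Real.rpow_le_rpow (abs_nonneg d) hd hr
    _ = (2 / s) ^ r * (|i| + a1 + a2 + m + n1 + n2 + N) ^ r := Real.mul_rpow h0 hT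
    _ ≤ (2 / s) ^ r * (8 ^ r * (|i| ^ r + a1 ^ r + a2 ^ r + m ^ r + n1 ^ r + n2 ^ r + N ^ r)) :=
        mul_le_mul_of_nonneg_left
          (rpow_seven_add_le hr (abs_nonneg i) ha1 ha2 hm hn1 hn2 hN)
          (Real.rpow_nonneg h0 r)
    _ = _ := by ring

set_option maxHeartbeats 2000000 in
/-- Proposition 1: moment bound `E(|d(X₁,X₂)|^{2+2τ}) ≤ C_τ B_X^{-(1+τ)} L_{x,τ}`. -/
theorem dcd_moment_bound (τ : ℝ) (hτ : 0 < τ) :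
    ∃ C : ℝ, 0 < C ∧
      ∀ (p : ℕ), 1 ≤ p →
      ∀ μ : Measure (EuclideanSpace ℝ (Fin p)),
        IsProbabilityMeasure μ →
        (∫ x, x ∂μ) = 0 →
        Integrable (fun x => ‖x‖ ^ (4 + 4 * τ)) μ →
        0 < Bmom μ →
        dMom μ (2 + 2 * τ) ≤ C * Bmom μ ^ (-(1 + τ)) * Lmom μ τ := by
  refine ⟨4 * 16 ^ (2 + 2 * τ : ℝ), by positivity, ?_⟩
  intro p hp μ hprob hmean hint hB
  simp only [dMom, Lmom, Bmom] at hB ⊢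
  obtain ⟨r, hrdef⟩ : ∃ r : ℝ, r = 2 + 2 * τ := ⟨_, rfl⟩
  rw [show (2 + 2 * τ : ℝ) = r from hrdef.symm]
  have hr1 : (1:ℝ) < r := by rw [hrdef]; linarith
  have hr0 : (0:ℝ) ≤ r := by linarith
  obtain ⟨c2, hc2def⟩ : ∃ c : ℝ, c = ∫ x, ‖x‖ ^ 2 ∂μ := ⟨_, rfl⟩
  rw [← hc2def] at hB ⊢
  have hc2 : 0 < c2 := by linarith
  obtain ⟨s, hsdef⟩ : ∃ s : ℝ, s = Real.sqrt (2 * c2) := ⟨_, rfl⟩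
  have hs : 0 < s := hsdef ▸ Real.sqrt_pos.mpr (by linarith)
  have hs2 : s ^ 2 = 2 * c2 := by rw [hsdef]; exact Real.sq_sqrt (by linarith)
  -- integrability of powers of the norm
  have hnormint : ∀ q : ℝ, 0 ≤ q → q ≤ 4 + 4 * τ → Integrable (fun x => ‖x‖ ^ q) μ := by
    intro q hq0 hq
    refine ((integrable_const (1:ℝ)).add hint).mono
      ((continuous_norm.rpow_const fun x => Or.inr hq0).aestronglyMeasurable)
      (Filter.Eventually.of_forall fun x => ?_)
    simp only [Pi.add_apply]
    rw [Real.norm_of_nonneg (Real.rpow_nonneg (norm_nonneg x) q)]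
    have hnn : 0 ≤ ‖x‖ ^ (4 + 4 * τ) := Real.rpow_nonneg (norm_nonneg x) _
    rw [Real.norm_of_nonneg (by linarith : (0:ℝ) ≤ 1 + ‖x‖ ^ (4 + 4 * τ))]
    rcases le_total ‖x‖ 1 with h | h
    · have := Real.rpow_le_one (norm_nonneg x) h hq0; linarith
    · have := Real.rpow_le_rpow_of_exponent_le h hq; linarith
  have hX1 : Integrable (fun x : EuclideanSpace ℝ (Fin p) => ‖x‖) μ := by
    have h := hnormint 1 (by norm_num) (by linarith)
    simpa [Real.rpow_one] using h
  have hX2 : Integrable (fun x : EuclideanSpace ℝ (Fin p) => ‖x‖ ^ 2) μ := by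
    have h := hnormint 2 (by norm_num) (by linarith)
    have e : ∀ t : ℝ, t ^ (2:ℝ) = t ^ (2:ℕ) := fun t => by
      rw [← Real.rpow_natCast t 2]; norm_num
    simpa [e] using h
  have hXr : Integrable (fun x : EuclideanSpace ℝ (Fin p) => ‖x‖ ^ r) μ :=
    hnormint r hr0 (by rw [hrdef]; linarith)
  have hX2r : Integrable (fun x : EuclideanSpace ℝ (Fin p) => ‖x‖ ^ (2 * r)) μ :=
    hnormint (2 * r) (by linarith) (by rw [hrdef]; linarith)
  have hid : Integrable (fun x : EuclideanSpace ℝ (Fin p) => x) μ :=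
    (integrable_norm_iff aestronglyMeasurable_id).mp hX1
  have ha_int : Integrable (fun x : EuclideanSpace ℝ (Fin p) => ‖x‖ ^ 2 - c2) μ :=
    hX2.sub (integrable_const c2)
  -- |a x| ^ r integrable
  have ha_r_int : Integrable (fun x : EuclideanSpace ℝ (Fin p) => |‖x‖ ^ 2 - c2| ^ r) μ := by
    refine ((hX2r.const_mul (2 ^ r)).add (integrable_const (2 ^ r * c2 ^ r))).mono
      ((((continuous_norm.pow 2).sub continuous_const).abs.rpow_const
        fun x => Or.inr hr0).aestronglyMeasurable)
      (Filter.Eventually.of_forall fun x => ?_)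
    simp only [Pi.add_apply]
    rw [Real.norm_of_nonneg (Real.rpow_nonneg (abs_nonneg _) r)]
    have h1 : |‖x‖ ^ 2 - c2| ≤ ‖x‖ ^ 2 + c2 := by
      refine (abs_sub _ _).trans ?_
      rw [abs_of_nonneg (by positivity : (0:ℝ) ≤ ‖x‖ ^ 2), abs_of_pos hc2]
    have h2 : |‖x‖ ^ 2 - c2| ^ r ≤ (‖x‖ ^ 2 + c2) ^ r :=
      Real.rpow_le_rpow (abs_nonneg _) h1 hr0
    have h3 : (‖x‖ ^ 2 + c2) ^ r ≤ 2 ^ r * ((‖x‖ ^ 2) ^ r + c2 ^ r) :=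
      rpow_two_add_le hr0 (by positivity) hc2.le
    have h4 : ((‖x‖ ^ 2 : ℝ)) ^ r = ‖x‖ ^ (2 * r) := by
      rw [← Real.rpow_natCast ‖x‖ 2, ← Real.rpow_mul (norm_nonneg x)]; norm_num
    have h5 : 0 ≤ 2 ^ r * ‖x‖ ^ (2*r) + 2 ^ r * c2 ^ r := by
      have := Real.rpow_nonneg (norm_nonneg x) (2*r)
      have := Real.rpow_nonneg hc2.le r
      have : (0:ℝ) ≤ (2:ℝ) ^ r := Real.rpow_nonneg (by norm_num) r
      positivity
    rw [Real.norm_of_nonneg h5]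
    rw [h4] at h3
    linarith
  -- inner product integrability
  have hinner_int : ∀ x, Integrable (fun y => (inner ℝ x y : ℝ)) μ := by
    intro x
    refine (hX1.const_mul ‖x‖).mono
      ((Continuous.inner continuous_const continuous_id).aestronglyMeasurable)
      (Filter.Eventually.of_forall fun y => ?_)
    rw [Real.norm_eq_abs, Real.norm_of_nonneg (by positivity)]
    exact abs_real_inner_le_norm x y
  have habsinner_int : ∀ x, Integrable (fun y => |(inner ℝ x y : ℝ)|) μ :=
    fun x => (hinner_int x).abs
  have hinner_r_int : ∀ x, Integrable (fun y => |(inner ℝ x y : ℝ)| ^ r) μ := by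
    intro x
    refine (hXr.const_mul (‖x‖ ^ r)).mono
      (((Continuous.inner continuous_const continuous_id).abs.rpow_const
        fun y => Or.inr hr0).aestronglyMeasurable)
      (Filter.Eventually.of_forall fun y => ?_)
    rw [Real.norm_of_nonneg (Real.rpow_nonneg (abs_nonneg _) r),
      Real.norm_of_nonneg (by positivity)]
    calc |(inner ℝ x y : ℝ)| ^ r ≤ (‖x‖ * ‖y‖) ^ r :=
          Real.rpow_le_rpow (abs_nonneg _) (abs_real_inner_le_norm x y) hr0
      _ = ‖x‖ ^ r * ‖y‖ ^ r := Real.mul_rpow (norm_nonneg x) (norm_nonneg y)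
  have hdist_int : ∀ x, Integrable (fun y => ‖x - y‖) μ := by
    intro x
    refine ((integrable_const ‖x‖).add hX1).mono
      ((continuous_const.sub continuous_id).norm.aestronglyMeasurable)
      (Filter.Eventually.of_forall fun y => ?_)
    simp only [Pi.add_apply]
    rw [Real.norm_of_nonneg (norm_nonneg _), Real.norm_of_nonneg (by positivity)]
    exact norm_sub_le x y
  have hdist2_int : ∀ x, Integrable (fun y => ‖x - y‖ ^ 2) μ := by
    intro x
    refine ((integrable_const (2 * ‖x‖ ^ 2)).add (hX2.const_mul 2)).mono
      (((continuous_const.sub continuous_id).norm.pow 2).aestronglyMeasurable)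
      (Filter.Eventually.of_forall fun y => ?_)
    simp only [Pi.add_apply]
    rw [Real.norm_of_nonneg (by positivity), Real.norm_of_nonneg (by positivity)]
    have h := norm_sub_le x y
    have h2 : ‖x - y‖ ^ 2 ≤ (‖x‖ + ‖y‖) ^ 2 := pow_le_pow_left₀ (norm_nonneg _) h 2
    nlinarith [sq_nonneg (‖x‖ - ‖y‖)]
  obtain ⟨R, hRdef⟩ : ∃ R : EuclideanSpace ℝ (Fin p) → EuclideanSpace ℝ (Fin p) → ℝ,
      R = fun x y => ‖x - y‖ - s - (‖x - y‖ ^ 2 - 2 * c2) / (2 * s) := ⟨_, rfl⟩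
  have hR_int : ∀ x, Integrable (fun y => R x y) μ := by
    intro x; rw [hRdef]
    exact ((hdist_int x).sub (integrable_const s)).sub
      (((hdist2_int x).sub (integrable_const (2 * c2))).div_const (2 * s))
  have habs_u : ∀ x y : EuclideanSpace ℝ (Fin p), |‖x - y‖ ^ 2 - 2 * c2| ≤
      |‖x‖ ^ 2 - c2| + |‖y‖ ^ 2 - c2| + 2 * |(inner ℝ x y : ℝ)| := by
    intro x y
    have hexp : ‖x - y‖ ^ 2 - 2 * c2 =
        ((‖x‖ ^ 2 - c2) + (‖y‖ ^ 2 - c2)) + (-2) * (inner ℝ x y : ℝ) := by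
      rw [norm_sub_sq_real]; ring
    rw [hexp]
    refine (abs_add_le _ _).trans ?_
    rw [abs_mul, abs_neg, abs_two]
    have h := abs_add_le (‖x‖ ^ 2 - c2) (‖y‖ ^ 2 - c2)
    linarith
  have hRabs : ∀ x y : EuclideanSpace ℝ (Fin p), |R x y| ≤
      (|‖x‖ ^ 2 - c2| + |‖y‖ ^ 2 - c2| + 2 * |(inner ℝ x y : ℝ)|) / (2 * s) := by
    intro x y
    have h1 : R x y = -(‖x - y‖ - s) ^ 2 / (2 * s) := by
      simp only [hRdef]
      rw [show 2 * c2 = s ^ 2 from hs2.symm]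
      field_simp
      ring
    rw [h1, abs_div, abs_neg, abs_of_pos (by positivity : (0:ℝ) < 2 * s),
      abs_of_nonneg (by positivity : (0:ℝ) ≤ (‖x - y‖ - s) ^ 2)]
    gcongr
    have key : (‖x - y‖ - s) ^ 2 ≤ |‖x - y‖ ^ 2 - 2 * c2| := by
      rw [← hs2]
      rcases abs_cases (‖x - y‖ ^ 2 - s ^ 2) with ⟨h, _⟩ | ⟨h, _⟩ <;>
        nlinarith [norm_nonneg (x - y), hs, sq_nonneg (‖x - y‖ - s)]
    exact key.trans (habs_u x y)
  have hIu : ∀ x : EuclideanSpace ℝ (Fin p),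
      ∫ y, (‖x - y‖ ^ 2 - 2 * c2) ∂μ = ‖x‖ ^ 2 - c2 := by
    intro x
    have h1 : ∀ y : EuclideanSpace ℝ (Fin p), ‖x - y‖ ^ 2 - 2 * c2 =
        (‖y‖ ^ 2 + (inner ℝ x y : ℝ) * (-2)) + (‖x‖ ^ 2 - 2 * c2) := fun y => by
      rw [norm_sub_sq_real]; ring
    simp only [h1]
    have i1 : Integrable (fun y => ‖y‖ ^ 2 + (inner ℝ x y : ℝ) * (-2)) μ :=
      hX2.add ((hinner_int x).mul_const (-2))
    rw [integral_add i1 (integrable_const _),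
      integral_add hX2 ((hinner_int x).mul_const (-2)), integral_mul_const,
      integral_inner hid, hmean, integral_const]
    simp only [inner_zero_right, probReal_univ, one_smul, zero_mul]
    rw [← hc2def]
    ring
  have ha_abs_int : Integrable (fun x => |‖x‖ ^ 2 - c2|) μ := ha_int.abs
  have hJ : ∀ x : EuclideanSpace ℝ (Fin p),
      ∫ y, ‖x - y‖ ∂μ = s + (‖x‖ ^ 2 - c2) / (2 * s) + ∫ y, R x y ∂μ := by
    intro x
    have h2 : ∫ y, R x y ∂μ = (∫ y, ‖x - y‖ ∂μ) - s - (‖x‖ ^ 2 - c2) / (2 * s) := by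
      simp only [hRdef]
      have j1 : Integrable (fun y => ‖x - y‖ - s) μ := (hdist_int x).sub (integrable_const s)
      have j2 : Integrable (fun y => (‖x - y‖ ^ 2 - 2 * c2) / (2 * s)) μ :=
        ((hdist2_int x).sub (integrable_const (2 * c2))).div_const (2 * s)
      rw [integral_sub j1 j2, integral_sub (hdist_int x) (integrable_const s),
        integral_div, hIu x, integral_const]
      simp [measure_univ]
    linarith
  have hJsm : StronglyMeasurable (fun x : EuclideanSpace ℝ (Fin p) => ∫ y, ‖x - y‖ ∂μ) :=
    (continuous_fst.sub continuous_snd).norm.stronglyMeasurable.integral_prod_right'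
  have hJint : Integrable (fun x : EuclideanSpace ℝ (Fin p) => ∫ y, ‖x - y‖ ∂μ) μ := by
    have hg : Integrable (fun x : EuclideanSpace ℝ (Fin p) => ‖x‖ + ∫ y, ‖y‖ ∂μ) μ :=
      hX1.add (integrable_const _)
    refine hg.mono hJsm.aestronglyMeasurable (Filter.Eventually.of_forall fun x => ?_)
    have hnn : 0 ≤ ∫ y, ‖x - y‖ ∂μ := integral_nonneg fun y => norm_nonneg _
    rw [Real.norm_of_nonneg hnn, Real.norm_of_nonneg
      (add_nonneg (norm_nonneg x) (integral_nonneg fun y => norm_nonneg y))]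
    have hg2 : Integrable (fun y : EuclideanSpace ℝ (Fin p) => ‖x‖ + ‖y‖) μ :=
      (integrable_const _).add hX1
    have h := integral_mono (hdist_int x) hg2 (fun y => norm_sub_le x y)
    rwa [integral_add (integrable_const ‖x‖) hX1, integral_const, probReal_univ,
      one_smul] at h
  have hRm_int : Integrable (fun x => ∫ y, R x y ∂μ) μ := by
    have heq : (fun x : EuclideanSpace ℝ (Fin p) => ∫ y, R x y ∂μ)
        = fun x => (∫ y, ‖x - y‖ ∂μ) - s - (‖x‖ ^ 2 - c2) / (2 * s) := by
      funext x; have := hJ x; linarith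
    rw [heq]
    exact (hJint.sub (integrable_const s)).sub (ha_int.div_const (2 * s))
  have hIa0 : ∫ x, (‖x‖ ^ 2 - c2) ∂μ = 0 := by
    rw [integral_sub hX2 (integrable_const c2), ← hc2def, integral_const]
    simp [measure_univ]
  have hRMint_eq : ∫ x, (∫ y, ‖x - y‖ ∂μ) ∂μ = s + ∫ x, (∫ y, R x y ∂μ) ∂μ := by
    have heq : (fun x : EuclideanSpace ℝ (Fin p) => ∫ y, ‖x - y‖ ∂μ)
        = fun x => (s + (‖x‖ ^ 2 - c2) / (2 * s)) + ∫ y, R x y ∂μ := by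
      funext x; have := hJ x; linarith
    have hg : Integrable (fun x : EuclideanSpace ℝ (Fin p) => s + (‖x‖ ^ 2 - c2) / (2 * s)) μ :=
      (integrable_const s).add (ha_int.div_const (2 * s))
    rw [heq, integral_add hg hRm_int, integral_add (integrable_const s) (ha_int.div_const (2 * s)),
      integral_div, hIa0, integral_const]
    simp [measure_univ]
  have hdcd : ∀ x₁ x₂ : EuclideanSpace ℝ (Fin p), dcd μ x₁ x₂ =
      -(inner ℝ x₁ x₂ : ℝ) / s + R x₁ x₂ - (∫ y, R x₁ y ∂μ) - (∫ y, R x₂ y ∂μ)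
        + ∫ x, (∫ y, R x y ∂μ) ∂μ := by
    intro x₁ x₂
    have hw : ‖x₁ - x₂‖ = s + ((‖x₁‖ ^ 2 - c2) + (‖x₂‖ ^ 2 - c2)
        - 2 * (inner ℝ x₁ x₂ : ℝ)) / (2 * s) + R x₁ x₂ := by
      have h1 : ‖x₁ - x₂‖ ^ 2 - 2 * c2 = (‖x₁‖ ^ 2 - c2) + (‖x₂‖ ^ 2 - c2)
          - 2 * (inner ℝ x₁ x₂ : ℝ) := by rw [norm_sub_sq_real]; ring
      simp only [hRdef]
      rw [← h1]
      ring
    simp only [dcd]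
    rw [hJ x₁, hJ x₂, hRMint_eq, hw]
    field_simp
    ring
  have hn_nonneg : ∀ x : EuclideanSpace ℝ (Fin p), 0 ≤ ∫ y, |(inner ℝ x y : ℝ)| ∂μ :=
    fun x => integral_nonneg fun y => abs_nonneg _
  have hm_nonneg : 0 ≤ ∫ z, |‖z‖ ^ 2 - c2| ∂μ := integral_nonneg fun z => abs_nonneg _
  have hnsm : StronglyMeasurable (fun x : EuclideanSpace ℝ (Fin p) =>
      ∫ y, |(inner ℝ x y : ℝ)| ∂μ) := by
    have hic : Continuous (fun q : EuclideanSpace ℝ (Fin p) × EuclideanSpace ℝ (Fin p) =>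
        |(inner ℝ q.1 q.2 : ℝ)|) := (continuous_inner (𝕜 := ℝ)).abs
    exact hic.stronglyMeasurable.integral_prod_right'
  have hn_int : Integrable (fun x => ∫ y, |(inner ℝ x y : ℝ)| ∂μ) μ := by
    refine (hX1.mul_const (∫ y, ‖y‖ ∂μ)).mono hnsm.aestronglyMeasurable
      (Filter.Eventually.of_forall fun x => ?_)
    rw [Real.norm_of_nonneg (hn_nonneg x), Real.norm_of_nonneg
      (mul_nonneg (norm_nonneg x) (integral_nonneg fun y => norm_nonneg y))]
    have h := integral_mono (habsinner_int x) (hX1.const_mul ‖x‖)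
      (fun y => abs_real_inner_le_norm x y)
    rwa [integral_const_mul] at h
  have hnbound : ∀ x : EuclideanSpace ℝ (Fin p),
      ∫ y, |(inner ℝ x y : ℝ)| ∂μ ≤ ‖x‖ * ∫ y, ‖y‖ ∂μ := by
    intro x
    have h := integral_mono (habsinner_int x) (hX1.const_mul ‖x‖)
      (fun y => abs_real_inner_le_norm x y)
    rwa [integral_const_mul] at h
  have hnr_int : Integrable (fun x => (∫ y, |(inner ℝ x y : ℝ)| ∂μ) ^ r) μ := by
    refine (hXr.mul_const ((∫ y, ‖y‖ ∂μ) ^ r)).mono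
      ((Real.continuous_rpow_const hr0).comp_stronglyMeasurable hnsm).aestronglyMeasurable
      (Filter.Eventually.of_forall fun x => ?_)
    have c1nn : 0 ≤ ∫ y, ‖y‖ ∂μ := integral_nonneg fun y => norm_nonneg y
    rw [Real.norm_of_nonneg (Real.rpow_nonneg (hn_nonneg x) r), Real.norm_of_nonneg
      (mul_nonneg (Real.rpow_nonneg (norm_nonneg x) r) (Real.rpow_nonneg c1nn r))]
    calc (∫ y, |(inner ℝ x y : ℝ)| ∂μ) ^ r ≤ (‖x‖ * ∫ y, ‖y‖ ∂μ) ^ r :=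
          Real.rpow_le_rpow (hn_nonneg x) (hnbound x) hr0
      _ = ‖x‖ ^ r * (∫ y, ‖y‖ ∂μ) ^ r := Real.mul_rpow (norm_nonneg x) c1nn
  have hRmabs : ∀ x : EuclideanSpace ℝ (Fin p), |∫ y, R x y ∂μ| ≤
      (|‖x‖ ^ 2 - c2| + (∫ z, |‖z‖ ^ 2 - c2| ∂μ)
        + 2 * ∫ y, |(inner ℝ x y : ℝ)| ∂μ) / (2 * s) := by
    intro x
    have hg : Integrable (fun y : EuclideanSpace ℝ (Fin p) =>
        (|‖x‖ ^ 2 - c2| + |‖y‖ ^ 2 - c2| + 2 * |(inner ℝ x y : ℝ)|) / (2 * s)) μ :=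
      (((integrable_const _).add ha_abs_int).add ((habsinner_int x).const_mul 2)).div_const _
    calc |∫ y, R x y ∂μ| ≤ ∫ y, |R x y| ∂μ := by
          simpa [Real.norm_eq_abs] using norm_integral_le_integral_norm (fun y => R x y) (μ := μ)
      _ ≤ ∫ y, (|‖x‖ ^ 2 - c2| + |‖y‖ ^ 2 - c2| + 2 * |(inner ℝ x y : ℝ)|) / (2 * s) ∂μ :=
          integral_mono (hR_int x).abs hg (fun y => hRabs x y)
      _ = _ := by
          have hg1 : Integrable (fun y : EuclideanSpace ℝ (Fin p) =>
              |‖x‖ ^ 2 - c2| + |‖y‖ ^ 2 - c2|) μ := (integrable_const _).add ha_abs_int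
          rw [integral_div, integral_add hg1 ((habsinner_int x).const_mul 2),
            integral_add (integrable_const _) ha_abs_int, integral_const_mul, integral_const]
          simp [measure_univ]
  have hRMabs : |∫ x, (∫ y, R x y ∂μ) ∂μ| ≤
      ((∫ z, |‖z‖ ^ 2 - c2| ∂μ) + (∫ z, |‖z‖ ^ 2 - c2| ∂μ)
        + 2 * ∫ x, (∫ y, |(inner ℝ x y : ℝ)| ∂μ) ∂μ) / (2 * s) := by
    have hg : Integrable (fun x : EuclideanSpace ℝ (Fin p) =>
        (|‖x‖ ^ 2 - c2| + (∫ z, |‖z‖ ^ 2 - c2| ∂μ)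
          + 2 * ∫ y, |(inner ℝ x y : ℝ)| ∂μ) / (2 * s)) μ :=
      ((ha_abs_int.add (integrable_const _)).add (hn_int.const_mul 2)).div_const _
    calc |∫ x, (∫ y, R x y ∂μ) ∂μ| ≤ ∫ x, |∫ y, R x y ∂μ| ∂μ := by
          simpa [Real.norm_eq_abs] using
            norm_integral_le_integral_norm (fun x => ∫ y, R x y ∂μ) (μ := μ)
      _ ≤ ∫ x, (|‖x‖ ^ 2 - c2| + (∫ z, |‖z‖ ^ 2 - c2| ∂μ)
            + 2 * ∫ y, |(inner ℝ x y : ℝ)| ∂μ) / (2 * s) ∂μ :=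
          integral_mono hRm_int.abs hg (fun x => hRmabs x)
      _ = _ := by
          have hg1 : Integrable (fun x : EuclideanSpace ℝ (Fin p) =>
              |‖x‖ ^ 2 - c2| + (∫ z, |‖z‖ ^ 2 - c2| ∂μ)) μ :=
            ha_abs_int.add (integrable_const _)
          rw [integral_div, integral_add hg1 (hn_int.const_mul 2),
            integral_add ha_abs_int (integrable_const _), integral_const_mul, integral_const]
          simp [measure_univ]
  -- pointwise master bound
  have habs3 : ∀ u v : ℝ, |u - v| ≤ |u| + |v| := fun u v => by
    simpa [sub_eq_add_neg, abs_neg] using abs_add_le u (-v)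
  have hptw : ∀ x₁ x₂ : EuclideanSpace ℝ (Fin p), |dcd μ x₁ x₂| ≤
      2 / s * (|(inner ℝ x₁ x₂ : ℝ)| + |‖x₁‖ ^ 2 - c2| + |‖x₂‖ ^ 2 - c2|
        + (∫ z, |‖z‖ ^ 2 - c2| ∂μ) + (∫ y, |(inner ℝ x₁ y : ℝ)| ∂μ)
        + (∫ y, |(inner ℝ x₂ y : ℝ)| ∂μ)
        + ∫ x, (∫ y, |(inner ℝ x y : ℝ)| ∂μ) ∂μ) := by
    intro x₁ x₂
    have e1 : |(-(inner ℝ x₁ x₂ : ℝ) / s)| = |(inner ℝ x₁ x₂ : ℝ)| / s := by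
      rw [abs_div, abs_neg, abs_of_pos hs]
    have hd : |dcd μ x₁ x₂| ≤ |(inner ℝ x₁ x₂ : ℝ)| / s + |R x₁ x₂| + |∫ y, R x₁ y ∂μ|
        + |∫ y, R x₂ y ∂μ| + |∫ x, (∫ y, R x y ∂μ) ∂μ| := by
      rw [hdcd x₁ x₂]
      have k1 := abs_add_le (-(inner ℝ x₁ x₂ : ℝ) / s) (R x₁ x₂)
      have k2 := habs3 (-(inner ℝ x₁ x₂ : ℝ) / s + R x₁ x₂) (∫ y, R x₁ y ∂μ)
      have k3 := habs3 (-(inner ℝ x₁ x₂ : ℝ) / s + R x₁ x₂ - ∫ y, R x₁ y ∂μ) (∫ y, R x₂ y ∂μ)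
      have k4 := abs_add_le (-(inner ℝ x₁ x₂ : ℝ) / s + R x₁ x₂ - (∫ y, R x₁ y ∂μ)
        - ∫ y, R x₂ y ∂μ) (∫ x, (∫ y, R x y ∂μ) ∂μ)
      rw [e1] at k1
      linarith
    exact combine_bounds hs hd (hRabs x₁ x₂) (hRmabs x₁) (hRmabs x₂) hRMabs
      (abs_nonneg _) (abs_nonneg _) hm_nonneg (hn_nonneg x₁) (hn_nonneg x₂)
      (integral_nonneg hn_nonneg)
  have hptwr : ∀ x₁ x₂ : EuclideanSpace ℝ (Fin p), |dcd μ x₁ x₂| ^ r ≤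
      (2 / s) ^ r * 8 ^ r * (|(inner ℝ x₁ x₂ : ℝ)| ^ r + |‖x₁‖ ^ 2 - c2| ^ r
        + |‖x₂‖ ^ 2 - c2| ^ r + (∫ z, |‖z‖ ^ 2 - c2| ∂μ) ^ r
        + (∫ y, |(inner ℝ x₁ y : ℝ)| ∂μ) ^ r + (∫ y, |(inner ℝ x₂ y : ℝ)| ∂μ) ^ r
        + (∫ x, (∫ y, |(inner ℝ x y : ℝ)| ∂μ) ∂μ) ^ r) :=
    fun x₁ x₂ => rpow_combine hr0 hs (hptw x₁ x₂) (abs_nonneg _) (abs_nonneg _)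
      hm_nonneg (hn_nonneg x₁) (hn_nonneg x₂) (integral_nonneg hn_nonneg)
  -- measurability and integrability of x ↦ ∫ |inner x y|^r
  have hInsm : StronglyMeasurable (fun x : EuclideanSpace ℝ (Fin p) =>
      ∫ y, |(inner ℝ x y : ℝ)| ^ r ∂μ) := by
    have hic : Continuous (fun q : EuclideanSpace ℝ (Fin p) × EuclideanSpace ℝ (Fin p) =>
        |(inner ℝ q.1 q.2 : ℝ)| ^ r) :=
      (continuous_inner (𝕜 := ℝ)).abs.rpow_const fun q => Or.inr hr0
    exact hic.stronglyMeasurable.integral_prod_right'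
  have hIn_int : Integrable (fun x => ∫ y, |(inner ℝ x y : ℝ)| ^ r ∂μ) μ := by
    refine (hXr.mul_const (∫ y, ‖y‖ ^ r ∂μ)).mono hInsm.aestronglyMeasurable
      (Filter.Eventually.of_forall fun x => ?_)
    have hnn : 0 ≤ ∫ y, |(inner ℝ x y : ℝ)| ^ r ∂μ :=
      integral_nonneg fun y => Real.rpow_nonneg (abs_nonneg _) r
    have hcr : 0 ≤ ∫ y, ‖y‖ ^ r ∂μ := integral_nonneg fun y => Real.rpow_nonneg (norm_nonneg _) r
    rw [Real.norm_of_nonneg hnn, Real.norm_of_nonneg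
      (mul_nonneg (Real.rpow_nonneg (norm_nonneg x) r) hcr)]
    have h := integral_mono (hinner_r_int x) (hXr.const_mul (‖x‖ ^ r)) (fun y => by
      calc |(inner ℝ x y : ℝ)| ^ r ≤ (‖x‖ * ‖y‖) ^ r :=
            Real.rpow_le_rpow (abs_nonneg _) (abs_real_inner_le_norm x y) hr0
        _ = ‖x‖ ^ r * ‖y‖ ^ r := Real.mul_rpow (norm_nonneg x) (norm_nonneg y))
    rwa [integral_const_mul] at h
  -- step A : inner integral bound
  have hstepA : ∀ x₁ : EuclideanSpace ℝ (Fin p), (∫ x₂, |dcd μ x₁ x₂| ^ r ∂μ) ≤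
      (2 / s) ^ r * 8 ^ r * ((∫ y, |(inner ℝ x₁ y : ℝ)| ^ r ∂μ) + |‖x₁‖ ^ 2 - c2| ^ r
        + (∫ z, |‖z‖ ^ 2 - c2| ^ r ∂μ) + (∫ z, |‖z‖ ^ 2 - c2| ∂μ) ^ r
        + (∫ y, |(inner ℝ x₁ y : ℝ)| ∂μ) ^ r
        + (∫ x, (∫ y, |(inner ℝ x y : ℝ)| ∂μ) ^ r ∂μ)
        + (∫ x, (∫ y, |(inner ℝ x y : ℝ)| ∂μ) ∂μ) ^ r) := by
    intro x₁
    have hgsum : Integrable (fun x₂ : EuclideanSpace ℝ (Fin p) =>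
        |(inner ℝ x₁ x₂ : ℝ)| ^ r + |‖x₁‖ ^ 2 - c2| ^ r + |‖x₂‖ ^ 2 - c2| ^ r
          + (∫ z, |‖z‖ ^ 2 - c2| ∂μ) ^ r + (∫ y, |(inner ℝ x₁ y : ℝ)| ∂μ) ^ r
          + (∫ y, |(inner ℝ x₂ y : ℝ)| ∂μ) ^ r
          + (∫ x, (∫ y, |(inner ℝ x y : ℝ)| ∂μ) ∂μ) ^ r) μ :=
      ((((((hinner_r_int x₁).add (integrable_const _)).add ha_r_int).add
        (integrable_const _)).add (integrable_const _)).add hnr_int).add (integrable_const _)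
    refine (integral_mono_of_nonneg
      (Filter.Eventually.of_forall fun x₂ => Real.rpow_nonneg (abs_nonneg _) r)
      (hgsum.const_mul ((2 / s) ^ r * 8 ^ r))
      (Filter.Eventually.of_forall fun x₂ => hptwr x₁ x₂)).trans_eq ?_
    rw [integral_const_mul]
    congr 1
    have i1 := hinner_r_int x₁
    have i2 : Integrable (fun _ : EuclideanSpace ℝ (Fin p) => |‖x₁‖ ^ 2 - c2| ^ r) μ :=
      integrable_const _
    have i4 : Integrable (fun _ : EuclideanSpace ℝ (Fin p) =>
      (∫ z, |‖z‖ ^ 2 - c2| ∂μ) ^ r) μ := integrable_const _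
    have i5 : Integrable (fun _ : EuclideanSpace ℝ (Fin p) =>
      (∫ y, |(inner ℝ x₁ y : ℝ)| ∂μ) ^ r) μ := integrable_const _
    have i7 : Integrable (fun _ : EuclideanSpace ℝ (Fin p) =>
      (∫ x, (∫ y, |(inner ℝ x y : ℝ)| ∂μ) ∂μ) ^ r) μ := integrable_const _
    have p2 : Integrable (fun x₂ : EuclideanSpace ℝ (Fin p) =>
        |(inner ℝ x₁ x₂ : ℝ)| ^ r + |‖x₁‖ ^ 2 - c2| ^ r) μ := i1.add i2
    have p3 : Integrable (fun x₂ : EuclideanSpace ℝ (Fin p) =>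
        |(inner ℝ x₁ x₂ : ℝ)| ^ r + |‖x₁‖ ^ 2 - c2| ^ r + |‖x₂‖ ^ 2 - c2| ^ r) μ :=
      p2.add ha_r_int
    have p4 : Integrable (fun x₂ : EuclideanSpace ℝ (Fin p) =>
        |(inner ℝ x₁ x₂ : ℝ)| ^ r + |‖x₁‖ ^ 2 - c2| ^ r + |‖x₂‖ ^ 2 - c2| ^ r
          + (∫ z, |‖z‖ ^ 2 - c2| ∂μ) ^ r) μ := p3.add i4
    have p5 : Integrable (fun x₂ : EuclideanSpace ℝ (Fin p) =>
        |(inner ℝ x₁ x₂ : ℝ)| ^ r + |‖x₁‖ ^ 2 - c2| ^ r + |‖x₂‖ ^ 2 - c2| ^ r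
          + (∫ z, |‖z‖ ^ 2 - c2| ∂μ) ^ r + (∫ y, |(inner ℝ x₁ y : ℝ)| ∂μ) ^ r) μ := p4.add i5
    have p6 : Integrable (fun x₂ : EuclideanSpace ℝ (Fin p) =>
        |(inner ℝ x₁ x₂ : ℝ)| ^ r + |‖x₁‖ ^ 2 - c2| ^ r + |‖x₂‖ ^ 2 - c2| ^ r
          + (∫ z, |‖z‖ ^ 2 - c2| ∂μ) ^ r + (∫ y, |(inner ℝ x₁ y : ℝ)| ∂μ) ^ r
          + (∫ y, |(inner ℝ x₂ y : ℝ)| ∂μ) ^ r) μ := p5.add hnr_int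
    rw [integral_add p6 i7, integral_add p5 hnr_int, integral_add p4 i5,
      integral_add p3 i4, integral_add p2 ha_r_int, integral_add i1 i2]
    simp [measure_univ]
  -- step B : outer integration
  have hstepB : (∫ x₁, (∫ x₂, |dcd μ x₁ x₂| ^ r ∂μ) ∂μ) ≤
      (2 / s) ^ r * 8 ^ r * ((∫ x₁, (∫ y, |(inner ℝ x₁ y : ℝ)| ^ r ∂μ) ∂μ)
        + (∫ z, |‖z‖ ^ 2 - c2| ^ r ∂μ) + (∫ z, |‖z‖ ^ 2 - c2| ^ r ∂μ)
        + (∫ z, |‖z‖ ^ 2 - c2| ∂μ) ^ r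
        + (∫ x, (∫ y, |(inner ℝ x y : ℝ)| ∂μ) ^ r ∂μ)
        + (∫ x, (∫ y, |(inner ℝ x y : ℝ)| ∂μ) ^ r ∂μ)
        + (∫ x, (∫ y, |(inner ℝ x y : ℝ)| ∂μ) ∂μ) ^ r) := by
    have hgsum : Integrable (fun x₁ : EuclideanSpace ℝ (Fin p) =>
        (∫ y, |(inner ℝ x₁ y : ℝ)| ^ r ∂μ) + |‖x₁‖ ^ 2 - c2| ^ r
          + (∫ z, |‖z‖ ^ 2 - c2| ^ r ∂μ) + (∫ z, |‖z‖ ^ 2 - c2| ∂μ) ^ r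
          + (∫ y, |(inner ℝ x₁ y : ℝ)| ∂μ) ^ r
          + (∫ x, (∫ y, |(inner ℝ x y : ℝ)| ∂μ) ^ r ∂μ)
          + (∫ x, (∫ y, |(inner ℝ x y : ℝ)| ∂μ) ∂μ) ^ r) μ :=
      (((((hIn_int.add ha_r_int).add (integrable_const _)).add
        (integrable_const _)).add hnr_int).add (integrable_const _)).add (integrable_const _)
    refine (integral_mono_of_nonneg
      (Filter.Eventually.of_forall fun x₁ =>
        integral_nonneg fun x₂ => Real.rpow_nonneg (abs_nonneg _) r)
      (hgsum.const_mul ((2 / s) ^ r * 8 ^ r))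
      (Filter.Eventually.of_forall fun x₁ => hstepA x₁)).trans_eq ?_
    rw [integral_const_mul]
    congr 1
    have i3 : Integrable (fun _ : EuclideanSpace ℝ (Fin p) =>
      ∫ z, |‖z‖ ^ 2 - c2| ^ r ∂μ) μ := integrable_const _
    have i4 : Integrable (fun _ : EuclideanSpace ℝ (Fin p) =>
      (∫ z, |‖z‖ ^ 2 - c2| ∂μ) ^ r) μ := integrable_const _
    have i6 : Integrable (fun _ : EuclideanSpace ℝ (Fin p) =>
      ∫ x, (∫ y, |(inner ℝ x y : ℝ)| ∂μ) ^ r ∂μ) μ := integrable_const _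
    have i7 : Integrable (fun _ : EuclideanSpace ℝ (Fin p) =>
      (∫ x, (∫ y, |(inner ℝ x y : ℝ)| ∂μ) ∂μ) ^ r) μ := integrable_const _
    have q2 : Integrable (fun x₁ : EuclideanSpace ℝ (Fin p) =>
        (∫ y, |(inner ℝ x₁ y : ℝ)| ^ r ∂μ) + |‖x₁‖ ^ 2 - c2| ^ r) μ := hIn_int.add ha_r_int
    have q3 : Integrable (fun x₁ : EuclideanSpace ℝ (Fin p) =>
        (∫ y, |(inner ℝ x₁ y : ℝ)| ^ r ∂μ) + |‖x₁‖ ^ 2 - c2| ^ r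
          + (∫ z, |‖z‖ ^ 2 - c2| ^ r ∂μ)) μ := q2.add i3
    have q4 : Integrable (fun x₁ : EuclideanSpace ℝ (Fin p) =>
        (∫ y, |(inner ℝ x₁ y : ℝ)| ^ r ∂μ) + |‖x₁‖ ^ 2 - c2| ^ r
          + (∫ z, |‖z‖ ^ 2 - c2| ^ r ∂μ) + (∫ z, |‖z‖ ^ 2 - c2| ∂μ) ^ r) μ := q3.add i4
    have q5 : Integrable (fun x₁ : EuclideanSpace ℝ (Fin p) =>
        (∫ y, |(inner ℝ x₁ y : ℝ)| ^ r ∂μ) + |‖x₁‖ ^ 2 - c2| ^ r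
          + (∫ z, |‖z‖ ^ 2 - c2| ^ r ∂μ) + (∫ z, |‖z‖ ^ 2 - c2| ∂μ) ^ r
          + (∫ y, |(inner ℝ x₁ y : ℝ)| ∂μ) ^ r) μ := q4.add hnr_int
    have q6 : Integrable (fun x₁ : EuclideanSpace ℝ (Fin p) =>
        (∫ y, |(inner ℝ x₁ y : ℝ)| ^ r ∂μ) + |‖x₁‖ ^ 2 - c2| ^ r
          + (∫ z, |‖z‖ ^ 2 - c2| ^ r ∂μ) + (∫ z, |‖z‖ ^ 2 - c2| ∂μ) ^ r
          + (∫ y, |(inner ℝ x₁ y : ℝ)| ∂μ) ^ r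
          + (∫ x, (∫ y, |(inner ℝ x y : ℝ)| ∂μ) ^ r ∂μ)) μ := q5.add i6
    rw [integral_add q6 i7, integral_add q5 i6, integral_add q4 hnr_int,
      integral_add q3 i4, integral_add q2 i3, integral_add hIn_int ha_r_int]
    simp [measure_univ]
  -- Jensen inequalities
  have hJen1 : (∫ z, |‖z‖ ^ 2 - c2| ∂μ) ^ r ≤ ∫ z, |‖z‖ ^ 2 - c2| ^ r ∂μ :=
    jensen_rpow μ hr1 ha_abs_int.aestronglyMeasurable (fun z => abs_nonneg _) ha_r_int
  have hJen2 : ∀ x : EuclideanSpace ℝ (Fin p),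
      (∫ y, |(inner ℝ x y : ℝ)| ∂μ) ^ r ≤ ∫ y, |(inner ℝ x y : ℝ)| ^ r ∂μ := fun x =>
    jensen_rpow μ hr1 (habsinner_int x).aestronglyMeasurable (fun y => abs_nonneg _)
      (hinner_r_int x)
  have hJen3 : (∫ x, (∫ y, |(inner ℝ x y : ℝ)| ∂μ) ∂μ) ^ r ≤
      ∫ x, (∫ y, |(inner ℝ x y : ℝ)| ∂μ) ^ r ∂μ :=
    jensen_rpow μ hr1 hnsm.aestronglyMeasurable hn_nonneg hnr_int
  have hNrI2 : (∫ x, (∫ y, |(inner ℝ x y : ℝ)| ∂μ) ^ r ∂μ) ≤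
      ∫ x, (∫ y, |(inner ℝ x y : ℝ)| ^ r ∂μ) ∂μ :=
    integral_mono hnr_int hIn_int (fun x => hJen2 x)
  -- assembling
  have hA0 : 0 ≤ ∫ z, |‖z‖ ^ 2 - c2| ^ r ∂μ :=
    integral_nonneg fun z => Real.rpow_nonneg (abs_nonneg _) r
  have hI20 : 0 ≤ ∫ x₁, (∫ x₂, |(inner ℝ x₁ x₂ : ℝ)| ^ r ∂μ) ∂μ :=
    integral_nonneg fun x => integral_nonneg fun y => Real.rpow_nonneg (abs_nonneg _) r
  have hK0 : (0:ℝ) ≤ (2 / s) ^ r * 8 ^ r :=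
    mul_nonneg (Real.rpow_nonneg (by positivity) r) (Real.rpow_nonneg (by norm_num) r)
  have hfinal1 : (∫ x₁, (∫ y, |(inner ℝ x₁ y : ℝ)| ^ r ∂μ) ∂μ)
        + (∫ z, |‖z‖ ^ 2 - c2| ^ r ∂μ) + (∫ z, |‖z‖ ^ 2 - c2| ^ r ∂μ)
        + (∫ z, |‖z‖ ^ 2 - c2| ∂μ) ^ r
        + (∫ x, (∫ y, |(inner ℝ x y : ℝ)| ∂μ) ^ r ∂μ)
        + (∫ x, (∫ y, |(inner ℝ x y : ℝ)| ∂μ) ^ r ∂μ)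
        + (∫ x, (∫ y, |(inner ℝ x y : ℝ)| ∂μ) ∂μ) ^ r ≤
      4 * ((∫ z, |‖z‖ ^ 2 - c2| ^ r ∂μ)
        + ∫ x₁, (∫ x₂, |(inner ℝ x₁ x₂ : ℝ)| ^ r ∂μ) ∂μ) := by
    have h3 := hJen3.trans hNrI2
    linarith
  -- constants
  have hsr : s ^ r = (2 * c2) ^ ((1:ℝ) / 2 * r) := by
    rw [hsdef, Real.sqrt_eq_rpow, ← Real.rpow_mul (by linarith : (0:ℝ) ≤ 2 * c2)]
  have hhalf : (1:ℝ) / 2 * r = 1 + τ := by rw [hrdef]; ring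
  have hconst : (2 / s) ^ r * 8 ^ r * 4 = 4 * 16 ^ r * (2 * c2) ^ (-(1 + τ)) := by
    have h16 : (16:ℝ) ^ r = 2 ^ r * 8 ^ r := by
      rw [show (16:ℝ) = 2 * 8 by norm_num, Real.mul_rpow (by norm_num) (by norm_num)]
    have hinv : (2 * c2) ^ (-(1 + τ)) = (s ^ r)⁻¹ := by
      rw [Real.rpow_neg (by linarith : (0:ℝ) ≤ 2 * c2), ← hhalf, ← hsr]
    have hsrpos : 0 < s ^ r := Real.rpow_pos_of_pos hs r
    rw [h16, hinv, Real.div_rpow (by norm_num) hs.le]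
    field_simp
  calc (∫ x₁, (∫ x₂, |dcd μ x₁ x₂| ^ r ∂μ) ∂μ) ≤ _ := hstepB
    _ ≤ (2 / s) ^ r * 8 ^ r * (4 * ((∫ z, |‖z‖ ^ 2 - c2| ^ r ∂μ)
          + ∫ x₁, (∫ x₂, |(inner ℝ x₁ x₂ : ℝ)| ^ r ∂μ) ∂μ)) :=
        mul_le_mul_of_nonneg_left hfinal1 hK0
    _ = ((2 / s) ^ r * 8 ^ r * 4) * ((∫ z, |‖z‖ ^ 2 - c2| ^ r ∂μ)
          + ∫ x₁, (∫ x₂, |(inner ℝ x₁ x₂ : ℝ)| ^ r ∂μ) ∂μ) := by ring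
    _ = 4 * 16 ^ r * (2 * c2) ^ (-(1 + τ)) * ((∫ z, |‖z‖ ^ 2 - c2| ^ r ∂μ)
          + ∫ x₁, (∫ x₂, |(inner ℝ x₁ x₂ : ℝ)| ^ r ∂μ) ∂μ) := by rw [hconst]

end
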